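/- Let m ≥ 1 be an integer and let q, s₁, s₂, ζ₁, ζ₂ be nonzero complex numbers such that (q;q)_k ≠ 0 and (q s₁/s₂;q)_k ≠ 0 and (q s₂/s₁;q)_k ≠ 0 for 1 ≤ k ≤ m−1, and s₂ − q^k s₁ ≠ 0 for 1 ≤ k ≤ m−1. Define P(ζ₁,ζ₂,s₁,s₂) = ζ₁^{m−1} Σ_{k=0}^{m−1} [(q^{1−m};q)_k (q^{1−m} s₁/s₂;q)_k / ((q;q)_k (q s₁/s₂;q)_k)] q^{mk} (ζ₂/ζ₁)^k (the terminating series ζ₁^{m−1}·₂φ₁(q t^{−1}, q t^{−1}s₁/s₂; q s₁/s₂; q, t ζ₂/ζ₁) at t = q^m). Then ∏_{k=1}^{m−1} [(s₁ − q^k s₂)/(s₂ − q^k s₁)] · P(ζ₂, ζ₁, s₂, s₁) = P(ζ₁, ζ₂, s₁, s₂). -/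

import Mathlib

/-!
Write `m = M + 1` and `u = s₁ / s₂`. Reversing the order of the factors of
`(q^{-M};q)_k` and `(q^{-M}u;q)_k` turns the `k`-th coefficient of `P` into
`(q;q)_M (q/u;q)_M` times the weight
`u^k / (q^{k(M-k)} (q;q)_k (qu;q)_k (q;q)_{M-k} (q/u;q)_{M-k})`,
which is invariant under `(u, k) ↦ (u⁻¹, M - k)` up to the factor `u^{-M}`.
So reflecting the summation index in `P(ζ₂,ζ₁,s₂,s₁)` reproduces `P(ζ₁,ζ₂,s₁,s₂)` term by term,
with the constant `u^M (q/u;q)_M / (qu;q)_M`, which is exactly the product in `π_m(σ₁)`.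
-/

/-- The q-shifted factorial `(a;q)_n = ∏_{k=0}^{n−1} (1 − a q^k)`. -/
noncomputable def qp (q a : ℂ) (n : ℕ) : ℂ := ∏ k ∈ Finset.range n, (1 - a * q ^ k)

/-- The terminating series
`P(ζ₁,ζ₂,s₁,s₂) = ζ₁^{m−1} ∑_{k=0}^{m−1} (q^{1−m};q)_k (q^{1−m}s₁/s₂;q)_k /
((q;q)_k (q s₁/s₂;q)_k) · q^{mk} (ζ₂/ζ₁)^k`,
which is `ζ₁^{m−1}·₂φ₁(qt⁻¹, qt⁻¹s₁/s₂; qs₁/s₂; q, tζ₂/ζ₁)` at `t = q^m`. -/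
noncomputable def Pser (m : ℕ) (q ζ₁ ζ₂ s₁ s₂ : ℂ) : ℂ :=
  ζ₁ ^ (m - 1) *
    ∑ k ∈ Finset.range m,
      qp q (q * (q ^ m)⁻¹) k * qp q (q * (q ^ m)⁻¹ * s₁ / s₂) k /
        (qp q q k * qp q (q * s₁ / s₂) k) * (q ^ m) ^ k * (ζ₂ / ζ₁) ^ k

open Finset

lemma qp_zero (q a : ℂ) : qp q a 0 = 1 := prod_range_zero _

lemma qp_succ (q a : ℂ) (n : ℕ) : qp q a (n + 1) = qp q a n * (1 - a * q ^ n) :=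
  prod_range_succ _ _

lemma qp_ne_zero_of_le {q a : ℂ} {M k : ℕ} (h : ∀ j, 1 ≤ j → j ≤ M → qp q a j ≠ 0)
    (hk : k ≤ M) : qp q a k ≠ 0 := by
  rcases k with _ | k
  · simp [qp_zero]
  · exact h _ k.succ_pos hk

lemma qp_inv_pow_mul_mul_qp_div {q x : ℂ} (hq : q ≠ 0) (hx : x ≠ 0) {M k : ℕ} (hk : k ≤ M) :
    qp q ((q ^ M)⁻¹ * x) k * qp q (q / x) (M - k) =
      (-x) ^ k * q ^ k.choose 2 / q ^ (M * k) * qp q (q / x) M := by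
  induction k with
  | zero => simp [qp_zero]
  | succ k ih =>
    obtain ⟨j, rfl⟩ : ∃ j, M = k + 1 + j := ⟨M - (k + 1), by omega⟩
    have ih := ih (by omega)
    rw [show k + 1 + j - k = j + 1 by omega, qp_succ q (q / x) j] at ih
    have hchoose : (k + 1).choose 2 = k.choose 2 + k := by
      rw [Nat.choose_succ_succ', Nat.choose_one_right, add_comm]
    have hfactor : 1 - (q ^ (k + 1 + j))⁻¹ * x * q ^ k =
        -(x * q ^ k / q ^ (k + 1 + j)) * (1 - q / x * q ^ j) := by
      field_simp
      ring
    rw [show k + 1 + j - (k + 1) = j by omega, qp_succ, hchoose, hfactor]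
    linear_combination (-(x * q ^ k / q ^ (k + 1 + j))) * ih

lemma choose_two_mul_two_add_self (k : ℕ) : k.choose 2 * 2 + k = k * k := by
  rw [Nat.choose_two_right, Nat.div_two_mul_two_of_even (Nat.even_mul_pred_self k)]
  cases k <;> simp [Nat.mul_add, Nat.add_assoc, Nat.mul_comm]

/-- The `k`-th coefficient of `Pser m q ζ₁ ζ₂ s₁ s₂`, as a function of `u = s₁ / s₂`. -/
noncomputable def pserCoeff (q : ℂ) (m : ℕ) (u : ℂ) (k : ℕ) : ℂ :=
  qp q (q * (q ^ m)⁻¹) k * qp q (q * (q ^ m)⁻¹ * u) k / (qp q q k * qp q (q * u) k) * (q ^ m) ^ k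

noncomputable def pserWeight (q u : ℂ) (M k : ℕ) : ℂ :=
  u ^ k / (q ^ (k * (M - k)) *
    (qp q q k * qp q (q * u) k * (qp q q (M - k) * qp q (q / u) (M - k))))

lemma pserCoeff_eq {q u : ℂ} (hq : q ≠ 0) (hu : u ≠ 0) {M k : ℕ} (hk : k ≤ M)
    (hqq : qp q q (M - k) ≠ 0) (hqu : qp q (q / u) (M - k) ≠ 0) :
    pserCoeff q (M + 1) u k = qp q q M * qp q (q / u) M * pserWeight q u M k := by
  have hshift : q * (q ^ (M + 1))⁻¹ = (q ^ M)⁻¹ := by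
    rw [pow_succ]
    field_simp
  have h1 := qp_inv_pow_mul_mul_qp_div hq one_ne_zero hk
  have hu' := qp_inv_pow_mul_mul_qp_div hq hu hk
  rw [mul_one, div_one] at h1
  rw [pserCoeff, pserWeight, hshift, eq_div_of_mul_eq hqu hu', eq_div_of_mul_eq hqq h1]
  obtain ⟨j, rfl⟩ : ∃ j, M = k + j := ⟨M - k, by omega⟩
  rw [show k + j - k = j by omega]
  have hpow : (q ^ k.choose 2) ^ 2 * (q ^ (k + j + 1)) ^ k * q ^ (k * j) =
      (q ^ ((k + j) * k)) ^ 2 := by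
    simp only [← pow_mul, ← pow_add]
    congr 1
    linarith [choose_two_mul_two_add_self k]
  have hsign : (-1) ^ k * (-u) ^ k = u ^ k := by
    rw [← mul_pow, neg_one_mul, neg_neg]
  field_simp
  congr 1
  linear_combination ((-1) ^ k * (-u) ^ k * qp q q (k + j) * qp q (q / u) (k + j)) * hpow +
    ((q ^ ((k + j) * k)) ^ 2 * qp q q (k + j) * qp q (q / u) (k + j)) * hsign

lemma pserWeight_inv_sub {q u : ℂ} (hu : u ≠ 0) {M k : ℕ} (hk : k ≤ M) :
    pserWeight q u⁻¹ M (M - k) = (u ^ M)⁻¹ * pserWeight q u M k := by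
  obtain ⟨j, rfl⟩ : ∃ j, M = k + j := ⟨M - k, by omega⟩
  simp only [pserWeight, show k + j - k = j by omega, show k + j - j = k by omega,
    ← div_eq_mul_inv, div_inv_eq_mul]
  rw [inv_pow, pow_add, mul_comm j k]
  field_simp

lemma pserCoeff_inv_sub {q u : ℂ} (hq : q ≠ 0) (hu : u ≠ 0) {M k : ℕ} (hk : k ≤ M)
    (hqq : ∀ j ≤ M, qp q q j ≠ 0) (hqu : ∀ j ≤ M, qp q (q * u) j ≠ 0)
    (hqu' : ∀ j ≤ M, qp q (q / u) j ≠ 0) :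
    u ^ M * qp q (q / u) M / qp q (q * u) M * pserCoeff q (M + 1) u⁻¹ (M - k) =
      pserCoeff q (M + 1) u k := by
  have hsub : M - (M - k) = k := by omega
  rw [pserCoeff_eq hq (inv_ne_zero hu) (Nat.sub_le M k) (by rw [hsub]; exact hqq k hk)
      (by rw [hsub, div_inv_eq_mul]; exact hqu k hk),
    pserCoeff_eq hq hu hk (hqq _ (Nat.sub_le M k)) (hqu' _ (Nat.sub_le M k)),
    pserWeight_inv_sub hu hk, div_inv_eq_mul]
  field_simp [hqu M le_rfl]

lemma Pser_succ_eq_sum {q ζ₁ : ℂ} (hζ₁ : ζ₁ ≠ 0) (ζ₂ s₁ s₂ : ℂ) (M : ℕ) :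
    Pser (M + 1) q ζ₁ ζ₂ s₁ s₂ =
      ∑ k ∈ range (M + 1), pserCoeff q (M + 1) (s₁ / s₂) k * (ζ₁ ^ (M - k) * ζ₂ ^ k) := by
  simp only [Pser, pserCoeff, Nat.add_sub_cancel, mul_div_assoc, mul_sum]
  refine sum_congr rfl fun k hk => ?_
  rw [← pow_sub_mul_pow ζ₁ (Nat.le_of_lt_succ (mem_range.1 hk)), div_pow]
  field_simp

lemma prod_Icc_div_eq {q s₁ s₂ : ℂ} (hs₁ : s₁ ≠ 0) (hs₂ : s₂ ≠ 0) (M : ℕ) :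
    ∏ k ∈ Icc 1 M, (s₁ - q ^ k * s₂) / (s₂ - q ^ k * s₁) =
      (s₁ / s₂) ^ M * qp q (q / (s₁ / s₂)) M / qp q (q * (s₁ / s₂)) M := by
  rw [qp, qp, ← Ico_add_one_right_eq_Icc, prod_Ico_eq_prod_range, Nat.add_sub_cancel,
    show (s₁ / s₂) ^ M = (s₁ / s₂) ^ #(range M) by rw [card_range], pow_card_mul_prod, ← prod_div_distrib]
  refine prod_congr rfl fun i _ => ?_
  rw [← div_div_div_cancel_right₀ hs₂]
  congr 1 <;> field_simp <;> ring

theorem statement3_general (m : ℕ) (q s₁ s₂ ζ₁ ζ₂ : ℂ)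
    (hq : q ≠ 0) (hs₁ : s₁ ≠ 0) (hs₂ : s₂ ≠ 0) (hζ₁ : ζ₁ ≠ 0) (hζ₂ : ζ₂ ≠ 0)
    (h1 : ∀ k : ℕ, 1 ≤ k → k ≤ m - 1 → qp q q k ≠ 0)
    (h2 : ∀ k : ℕ, 1 ≤ k → k ≤ m - 1 → qp q (q * s₁ / s₂) k ≠ 0)
    (h3 : ∀ k : ℕ, 1 ≤ k → k ≤ m - 1 → qp q (q * s₂ / s₁) k ≠ 0) :
    (∏ k ∈ Finset.Icc 1 (m - 1), (s₁ - q ^ k * s₂) / (s₂ - q ^ k * s₁)) *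
        Pser m q ζ₂ ζ₁ s₂ s₁
      = Pser m q ζ₁ ζ₂ s₁ s₂ := by
  obtain _ | M := m
  · simp [Pser]
  simp only [Nat.add_sub_cancel] at h1 h2 h3 ⊢
  simp only [mul_div_assoc] at h2
  simp only [← div_div_eq_mul_div] at h3
  rw [prod_Icc_div_eq hs₁ hs₂, Pser_succ_eq_sum hζ₂, Pser_succ_eq_sum hζ₁, ← sum_range_reflect,
    mul_sum]
  refine sum_congr rfl fun k hk => ?_
  have hkM : k ≤ M := Nat.le_of_lt_succ (mem_range.1 hk)
  rw [Nat.add_sub_cancel, Nat.sub_sub_self hkM, ← inv_div s₁ s₂,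
    ← pserCoeff_inv_sub hq (div_ne_zero hs₁ hs₂) hkM (fun _ => qp_ne_zero_of_le h1)
      (fun _ => qp_ne_zero_of_le h2) (fun _ => qp_ne_zero_of_le h3)]
  ring

/-- The terminating ₂φ₁ series `P` is invariant under the deformed
Weyl group action `π_m(σ₁)`. -/
theorem statement3 (m : ℕ) (hm : 1 ≤ m) (q s₁ s₂ ζ₁ ζ₂ : ℂ)
    (hq : q ≠ 0) (hs₁ : s₁ ≠ 0) (hs₂ : s₂ ≠ 0) (hζ₁ : ζ₁ ≠ 0) (hζ₂ : ζ₂ ≠ 0)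
    (h1 : ∀ k : ℕ, 1 ≤ k → k ≤ m - 1 → qp q q k ≠ 0)
    (h2 : ∀ k : ℕ, 1 ≤ k → k ≤ m - 1 → qp q (q * s₁ / s₂) k ≠ 0)
    (h3 : ∀ k : ℕ, 1 ≤ k → k ≤ m - 1 → qp q (q * s₂ / s₁) k ≠ 0)
    (h4 : ∀ k : ℕ, 1 ≤ k → k ≤ m - 1 → s₂ - q ^ k * s₁ ≠ 0) :
    (∏ k ∈ Finset.Icc 1 (m - 1), (s₁ - q ^ k * s₂) / (s₂ - q ^ k * s₁)) *
        Pser m q ζ₂ ζ₁ s₂ s₁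
      = Pser m q ζ₁ ζ₂ s₁ s₂ :=
  statement3_general m q s₁ s₂ ζ₁ ζ₂ hq hs₁ hs₂ hζ₁ hζ₂ h1 h2 h3
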